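/- Let C ∉ S₀ be a metabolite for which some explanation with respect to S₀ and R exists. Two rules Θ₁, Θ₂ ∈ R are mutually essential in S₀ for C if and only if (a) neither Θ₁ nor Θ₂ is essential in S₀ for C, and (b) every χ-path from S₀ in Gr((R,S₀)) leading to C contains a transition labeled by Θ₁ or a transition labeled by Θ₂. -/

import Mathlib

/-- A biochemical rule: either binary `A₁ ∘ A₂ → C` or unary `A → C`. -/
inductive Rule (M : Type) where
  | binary (a₁ a₂ c : M) : Rule M
  | unary (a c : M) : Rule M
  deriving DecidableEq

namespace Rule

/-- The conclusion (produced metabolite) of a rule. -/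
def concl {M : Type} : Rule M → M
  | .binary _ _ c => c
  | .unary _ c => c

/-- The premises of a rule, as a finite set. -/
def premises {M : Type} [DecidableEq M] : Rule M → Finset M
  | .binary a₁ a₂ _ => {a₁, a₂}
  | .unary a _ => {a}

/-- The premises of a rule, as a set. -/
def premSet {M : Type} : Rule M → Set M
  | .binary a₁ a₂ _ => {a₁, a₂}
  | .unary a _ => {a}

end Rule

/-- Explanation trees: leaves `C[]`, unary nodes `C_r[E]`, binary nodes `C_r[E₁,E₂]`. -/
inductive Expl (M : Type) where
  | leaf (c : M) : Expl M
  | node1 (r : Rule M) (e : Expl M) : Expl M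
  | node2 (r : Rule M) (e₁ e₂ : Expl M) : Expl M

namespace Expl

/-- The root metabolite of an explanation. -/
def root {M : Type} : Expl M → M
  | .leaf c => c
  | .node1 r _ => r.concl
  | .node2 r _ _ => r.concl

/-- `ℛ(E)`: the set of rules used by an explanation. -/
def rules {M : Type} : Expl M → Set (Rule M)
  | .leaf _ => ∅
  | .node1 r e => {r} ∪ e.rules
  | .node2 r e₁ e₂ => {r} ∪ e₁.rules ∪ e₂.rules

/-- `ℳ(E)`: the set of metabolites required by an explanation. -/
def mets {M : Type} : Expl M → Set M
  | .leaf c => {c}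
  | .node1 r e => r.premSet ∪ e.mets
  | .node2 r e₁ e₂ => r.premSet ∪ e₁.mets ∪ e₂.mets

/-- Subexplanation (subtree) relation. -/
inductive Sub {M : Type} : Expl M → Expl M → Prop where
  | refl (e : Expl M) : Sub e e
  | node1 {e e' : Expl M} {r : Rule M} : Sub e e' → Sub e (.node1 r e')
  | left {e e₁ e₂ : Expl M} {r : Rule M} : Sub e e₁ → Sub e (.node2 r e₁ e₂)
  | right {e e₁ e₂ : Expl M} {r : Rule M} : Sub e e₂ → Sub e (.node2 r e₁ e₂)

/-- An explanation is uniform if any two subexplanations with the same root metabolite coincide. -/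
def Uniform {M : Type} (E : Expl M) : Prop :=
  ∀ e₁ e₂ : Expl M, Sub e₁ E → Sub e₂ E → root e₁ = root e₂ → e₁ = e₂

end Expl

/-- `IsExpl S R C E`: `E` is an explanation for `C` w.r.t. initial solution `S` and m-network `R`. -/
inductive IsExpl {M : Type} (S : Finset M) (R : Finset (Rule M)) : M → Expl M → Prop where
  | leaf {c : M} : c ∈ S → IsExpl S R c (.leaf c)
  | node1 {a c : M} {e : Expl M} : Rule.unary a c ∈ R → IsExpl S R a e →
      IsExpl S R c (.node1 (Rule.unary a c) e)
  | node2 {a₁ a₂ c : M} {e₁ e₂ : Expl M} : Rule.binary a₁ a₂ c ∈ R →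
      IsExpl S R a₁ e₁ → IsExpl S R a₂ e₂ →
      IsExpl S R c (.node2 (Rule.binary a₁ a₂ c) e₁ e₂)

/-- A rule `r ∈ R` is essential in `S` for `C`. -/
def Essential {M : Type} [DecidableEq M] (S : Finset M) (R : Finset (Rule M))
    (r : Rule M) (C : M) : Prop :=
  (∃ E : Expl M, IsExpl S R C E) ∧ ¬ ∃ E : Expl M, IsExpl S (R.erase r) C E

/-- Rules `r₁, r₂ ∈ R` are mutually essential in `S` for `C`. -/
def MutuallyEssential {M : Type} [DecidableEq M] (S : Finset M) (R : Finset (Rule M))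
    (r₁ r₂ : Rule M) (C : M) : Prop :=
  (∃ E : Expl M, IsExpl S (R.erase r₁) C E) ∧
  (∃ E : Expl M, IsExpl S (R.erase r₂) C E) ∧
  ¬ ∃ E : Expl M, IsExpl S ((R.erase r₁).erase r₂) C E

section Paths

variable {M : Type} [DecidableEq M]

/-- A path in `Gr((R,S₀))`, represented by its list of transition rules from a starting state. -/
inductive IsPath (R : Finset (Rule M)) : Finset M → List (Rule M) → Prop where
  | nil (S : Finset M) : IsPath R S []
  | cons {S : Finset M} {r : Rule M} {rs : List (Rule M)} :
      r ∈ R → r.premises ⊆ S → IsPath R (insert r.concl S) rs → IsPath R S (r :: rs)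

/-- A χ-path: a path with no self-loop transitions (each step produces a genuinely new state). -/
inductive IsChiPath (R : Finset (Rule M)) : Finset M → List (Rule M) → Prop where
  | nil (S : Finset M) : IsChiPath R S []
  | cons {S : Finset M} {r : Rule M} {rs : List (Rule M)} :
      r ∈ R → r.premises ⊆ S → r.concl ∉ S →
      IsChiPath R (insert r.concl S) rs → IsChiPath R S (r :: rs)

/-- `LeadsTo C S rs`: the path `rs` from `S` leads to `C`, i.e. its last produced metabolite
is `C` and its final state is the first state containing `C`. -/
def LeadsTo (C : M) : Finset M → List (Rule M) → Prop
  | _, [] => False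
  | S, [r] => C ∉ S ∧ r.concl = C
  | S, r :: rs => C ∉ S ∧ LeadsTo C (insert r.concl S) rs

/-- The final state of a path. -/
def run (S : Finset M) : List (Rule M) → Finset M
  | [] => S
  | r :: rs => run (insert r.concl S) rs

/-- Auxiliary predicate for ρ-paths: `Xs` accumulates the previously produced metabolites,
`Us` the union of the previous `Ŝᵢ = premises Θᵢ ∩ S₀`, `S` is the current state. -/
def IsRhoAux (R : Finset (Rule M)) (S₀ : Finset M) :
    Finset M → Finset M → Finset M → List (Rule M) → Prop
  | _, _, _, [] => True
  | Xs, Us, S, r :: rs =>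
      r ∈ R ∧ r.premises ⊆ S ∧
      (r.concl ∈ S → r.concl ∈ S₀ ∧ r.concl ∉ Xs ∧ r.concl ∉ Us) ∧
      IsRhoAux R S₀ (insert r.concl Xs) (Us ∪ (r.premises ∩ S₀)) (insert r.concl S) rs

/-- A ρ-path from `S₀` in `Gr((R,S₀))`. -/
def IsRhoPath (R : Finset (Rule M)) (S₀ : Finset M) (rs : List (Rule M)) : Prop :=
  IsRhoAux R S₀ ∅ ∅ S₀ rs

/-- `Ŝ₁ ∪ ⋯ ∪ Ŝ_m`: the union of the parts of `S₀` used by the transitions of the path. -/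
def hatUnion (S₀ : Finset M) (rs : List (Rule M)) : Finset M :=
  rs.foldr (fun r acc => (r.premises ∩ S₀) ∪ acc) ∅

/-- `𝒰(p) = (Ŝ₁ ∪ ⋯ ∪ Ŝ_m) \ {X₁,…,X_m}`. -/
def usedMet (S₀ : Finset M) (rs : List (Rule M)) : Finset M :=
  hatUnion S₀ rs \ (rs.map Rule.concl).toFinset

end Paths

/-
An explanation for `C` is the same thing as a way of producing `C` by firing rules one at a
time from `S₀`: a tree is flattened into a path by firing its subtrees in sequence, and
conversely every metabolite produced along a path has an explanation built from the
explanations of the premises of the rule that produced it. Dropping self-loops and cutting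
the path at the first state containing `C` turns this into: for `C ∉ S₀`, `C` has an
explanation w.r.t. `R'` iff some χ-path in `R'` leads to `C`. A χ-path in `R \ {Θ}` is a
χ-path in `R` avoiding `Θ`, so both sides of the equivalence unfold to the same statement
about χ-paths in `R` avoiding `Θ₁`, `Θ₂`.
-/

section Paths

variable {M : Type} [DecidableEq M]

theorem run_append (S : Finset M) (rs₁ rs₂ : List (Rule M)) :
    run S (rs₁ ++ rs₂) = run (run S rs₁) rs₂ := by
  induction rs₁ generalizing S with
  | nil => rfl
  | cons r rs ih => exact ih _

theorem subset_run (S : Finset M) (rs : List (Rule M)) : S ⊆ run S rs := by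
  induction rs generalizing S with
  | nil => exact subset_rfl
  | cons r rs ih => exact (Finset.subset_insert _ _).trans (ih _)

theorem run_mono {S T : Finset M} (h : S ⊆ T) (rs : List (Rule M)) :
    run S rs ⊆ run T rs := by
  induction rs generalizing S T with
  | nil => exact h
  | cons r rs ih => exact ih (Finset.insert_subset_insert _ h)

namespace IsPath

variable {R : Finset (Rule M)}

theorem mono_left {S T : Finset M} {rs : List (Rule M)} (h : IsPath R S rs) (hST : S ⊆ T) :
    IsPath R T rs := by
  induction h generalizing T with
  | nil => exact .nil _
  | cons hr hprem _ ih =>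
    exact .cons hr (hprem.trans hST) (ih (Finset.insert_subset_insert _ hST))

theorem append {S : Finset M} {rs₁ rs₂ : List (Rule M)} (h₁ : IsPath R S rs₁)
    (h₂ : IsPath R (run S rs₁) rs₂) : IsPath R S (rs₁ ++ rs₂) := by
  induction h₁ with
  | nil => exact h₂
  | cons hr hprem _ ih => exact .cons hr hprem (ih h₂)

/-- Dropping the transitions that do not change the state leaves a χ-path. -/
theorem exists_isChiPath {S : Finset M} {rs : List (Rule M)} (h : IsPath R S rs) :
    ∃ rs', IsChiPath R S rs' ∧ run S rs' = run S rs := by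
  induction h with
  | nil S => exact ⟨[], .nil _, rfl⟩
  | @cons S r rs hr hprem _ ih =>
    obtain ⟨rs', hchi, hrun⟩ := ih
    by_cases hc : r.concl ∈ S
    · rw [Finset.insert_eq_self.mpr hc] at hchi hrun
      exact ⟨rs', hchi, by rw [hrun, run, Finset.insert_eq_self.mpr hc]⟩
    · exact ⟨r :: rs', .cons hr hprem hc hchi, hrun⟩

theorem exists_isExpl_of_mem_run {S₀ S : Finset M} {rs : List (Rule M)} (h : IsPath R S rs)
    (hS : ∀ m ∈ S, ∃ E, IsExpl S₀ R m E) : ∀ m ∈ run S rs, ∃ E, IsExpl S₀ R m E := by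
  induction h with
  | nil => exact hS
  | @cons S r rs hr hprem _ ih =>
    refine ih fun m hm => ?_
    rcases Finset.mem_insert.mp hm with rfl | hm
    · cases r with
      | unary a c =>
        obtain ⟨E, hE⟩ := hS a (hprem (by simp [Rule.premises]))
        exact ⟨_, .node1 hr hE⟩
      | binary a₁ a₂ c =>
        obtain ⟨E₁, hE₁⟩ := hS a₁ (hprem (by simp [Rule.premises]))
        obtain ⟨E₂, hE₂⟩ := hS a₂ (hprem (by simp [Rule.premises]))
        exact ⟨_, .node2 hr hE₁ hE₂⟩
    · exact hS m hm

end IsPath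

/-- Fire the rules of each subexplanation in turn, then the rule at the root. -/
theorem IsExpl.exists_isPath {R : Finset (Rule M)} {S₀ : Finset M} {c : M} {E : Expl M}
    (h : IsExpl S₀ R c E) : ∃ rs, IsPath R S₀ rs ∧ c ∈ run S₀ rs := by
  induction h with
  | leaf hc => exact ⟨[], .nil _, hc⟩
  | @node1 a c _ hr _ ih =>
    obtain ⟨rs, hp, ha⟩ := ih
    refine ⟨rs ++ [.unary a c], hp.append (.cons hr ?_ (.nil _)), ?_⟩
    · simpa [Rule.premises] using ha
    · simp [run_append, run, Rule.concl]
  | @node2 a₁ a₂ c _ _ hr _ _ ih₁ ih₂ =>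
    obtain ⟨rs₁, hp₁, ha₁⟩ := ih₁
    obtain ⟨rs₂, hp₂, ha₂⟩ := ih₂
    have hprem : (Rule.binary a₁ a₂ c).premises ⊆ run (run S₀ rs₁) rs₂ := by
      simp only [Rule.premises, Finset.insert_subset_iff, Finset.singleton_subset_iff]
      exact ⟨subset_run _ _ ha₁, run_mono (subset_run _ _) _ ha₂⟩
    refine ⟨rs₁ ++ (rs₂ ++ [.binary a₁ a₂ c]),
      hp₁.append ((hp₂.mono_left (subset_run _ _)).append (.cons hr hprem (.nil _))), ?_⟩
    simp [run_append, run, Rule.concl]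

namespace IsChiPath

variable {R : Finset (Rule M)}

theorem isPath {S : Finset M} {rs : List (Rule M)} (h : IsChiPath R S rs) : IsPath R S rs := by
  induction h with
  | nil => exact .nil _
  | cons hr hprem _ _ ih => exact .cons hr hprem ih

theorem exists_leadsTo {C : M} {S : Finset M} {rs : List (Rule M)} (h : IsChiPath R S rs)
    (hC : C ∈ run S rs) (hCS : C ∉ S) : ∃ rs', IsChiPath R S rs' ∧ LeadsTo C S rs' := by
  induction h with
  | nil S => exact absurd hC hCS
  | @cons S r rs hr hprem hnew _ ih =>
    by_cases hrC : r.concl = C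
    · exact ⟨[r], .cons hr hprem hnew (.nil _), hCS, hrC⟩
    · have hCS' : C ∉ insert r.concl S := by
        simp only [Finset.mem_insert, not_or]
        exact ⟨Ne.symm hrC, hCS⟩
      obtain ⟨_ | ⟨r', rs'⟩, hchi, hlead⟩ := ih hC hCS'
      · exact hlead.elim
      · exact ⟨r :: r' :: rs', .cons hr hprem hnew hchi, hCS, hlead⟩

end IsChiPath

theorem isChiPath_erase_iff {R : Finset (Rule M)} {Θ : Rule M} {S : Finset M}
    {rs : List (Rule M)} : IsChiPath (R.erase Θ) S rs ↔ IsChiPath R S rs ∧ Θ ∉ rs := by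
  induction rs generalizing S with
  | nil => exact ⟨fun _ => ⟨.nil _, List.not_mem_nil⟩, fun _ => .nil _⟩
  | cons r rs ih =>
    constructor
    · rintro (_ | ⟨hr, hprem, hnew, hrest⟩)
      obtain ⟨hrΘ, hrR⟩ := Finset.mem_erase.mp hr
      obtain ⟨hchi, hΘ⟩ := ih.mp hrest
      exact ⟨.cons hrR hprem hnew hchi, by simp [List.mem_cons, hΘ, Ne.symm hrΘ]⟩
    · rintro ⟨_ | ⟨hr, hprem, hnew, hrest⟩, hΘ⟩
      rw [List.mem_cons, not_or] at hΘ
      exact .cons (Finset.mem_erase.mpr ⟨Ne.symm hΘ.1, hr⟩) hprem hnew (ih.mpr ⟨hrest, hΘ.2⟩)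

theorem LeadsTo.mem_run {C : M} {S : Finset M} {rs : List (Rule M)} (h : LeadsTo C S rs) :
    C ∈ run S rs := by
  induction rs generalizing S with
  | nil => exact h.elim
  | cons r rs ih =>
    cases rs with
    | nil => simp [run, h.2]
    | cons r' rs' => exact ih h.2

theorem exists_isExpl_iff_exists_leadsTo {R : Finset (Rule M)} {S₀ : Finset M} {C : M}
    (hC : C ∉ S₀) :
    (∃ E, IsExpl S₀ R C E) ↔ ∃ rs, IsChiPath R S₀ rs ∧ LeadsTo C S₀ rs := by
  constructor
  · rintro ⟨E, hE⟩
    obtain ⟨rs, hpath, hCrun⟩ := hE.exists_isPath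
    obtain ⟨rs', hchi, hrun⟩ := hpath.exists_isChiPath
    exact hchi.exists_leadsTo (hrun ▸ hCrun) hC
  · rintro ⟨rs, hchi, hlead⟩
    exact hchi.isPath.exists_isExpl_of_mem_run (fun m hm => ⟨_, .leaf hm⟩) C hlead.mem_run

end Paths

theorem stmt9_general {M : Type} [DecidableEq M] (R : Finset (Rule M)) (S₀ : Finset M) (C : M)
    (Θ₁ Θ₂ : Rule M) (hC : C ∉ S₀) (hex : ∃ E : Expl M, IsExpl S₀ R C E) :
    MutuallyEssential S₀ R Θ₁ Θ₂ C ↔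
      (¬ Essential S₀ R Θ₁ C ∧ ¬ Essential S₀ R Θ₂ C ∧
        ∀ rs : List (Rule M), IsChiPath R S₀ rs → LeadsTo C S₀ rs →
          (Θ₁ ∈ rs ∨ Θ₂ ∈ rs)) := by
  have not_essential_iff (Θ : Rule M) :
      ¬ Essential S₀ R Θ C ↔ ∃ E, IsExpl S₀ (R.erase Θ) C E := by
    simp [Essential, hex]
  simp only [MutuallyEssential, not_essential_iff, exists_isExpl_iff_exists_leadsTo hC,
    isChiPath_erase_iff]
  grind

/-- for `C ∉ S₀` with some explanation, `Θ₁, Θ₂ ∈ R` are mutually essential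
in `S₀` for `C` iff neither is essential and every χ-path from `S₀` leading to `C` contains
a transition labelled by `Θ₁` or by `Θ₂`. -/
theorem stmt9 {M : Type} [DecidableEq M] (R : Finset (Rule M)) (S₀ : Finset M) (C : M)
    (Θ₁ Θ₂ : Rule M) (hC : C ∉ S₀) (hex : ∃ E : Expl M, IsExpl S₀ R C E)
    (hΘ₁ : Θ₁ ∈ R) (hΘ₂ : Θ₂ ∈ R) :
    MutuallyEssential S₀ R Θ₁ Θ₂ C ↔
      (¬ Essential S₀ R Θ₁ C ∧ ¬ Essential S₀ R Θ₂ C ∧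
        ∀ rs : List (Rule M), IsChiPath R S₀ rs → LeadsTo C S₀ rs →
          (Θ₁ ∈ rs ∨ Θ₂ ∈ rs)) :=
  stmt9_general R S₀ C Θ₁ Θ₂ hC hex
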